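/- Let N be a central ideal of a finite-dimensional Lie algebra L. Then the following are equivalent: (i) M(L) ≅ M(L/N)/(N ∩ L²) (via the natural maps); (ii) N is contained in the exterior center Z^∧(L); (iii) the natural map M(L) → M(L/N) is injective. -/

import Mathlib

open Module

/-- The Schur multiplier `M(L) = (R ∩ F²)/[R,F]` of a Lie algebra `L`, computed from a
free presentation `π : FreeLieAlgebra K X → L` (with `R = ker π`, `F² = [F,F]`). -/
noncomputable abbrev lieSchurMultiplier (K : Type) [Field K] (X : Type) {L : Type}
    [LieRing L] [LieAlgebra K L] (π : FreeLieAlgebra K X →ₗ⁅K⁆ L) : Type :=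
  ↥((π.ker ⊓ LieModule.lowerCentralSeries K (FreeLieAlgebra K X) (FreeLieAlgebra K X) 1 :
      LieIdeal K (FreeLieAlgebra K X)) : Submodule K (FreeLieAlgebra K X)) ⧸
    Submodule.comap
      ((π.ker ⊓ LieModule.lowerCentralSeries K (FreeLieAlgebra K X) (FreeLieAlgebra K X) 1 :
        LieIdeal K (FreeLieAlgebra K X)) : Submodule K (FreeLieAlgebra K X)).subtype
      ((⁅π.ker, (⊤ : LieIdeal K (FreeLieAlgebra K X))⁆ :
        LieIdeal K (FreeLieAlgebra K X)) : Submodule K (FreeLieAlgebra K X))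

/-- The exterior center `Z^∧(L)` of `L`, computed from a free presentation `π : F → L`:
`x ∈ Z^∧(L)` iff `x ∧ y = 0` in `L ∧ L ≅ F²/[R,F]` for all `y ∈ L`. -/
def lieExteriorCenter (K : Type) [Field K] (X : Type) {L : Type}
    [LieRing L] [LieAlgebra K L] (π : FreeLieAlgebra K X →ₗ⁅K⁆ L) : Set L :=
  {x : L | ∀ a : FreeLieAlgebra K X, π a = x → ∀ b : FreeLieAlgebra K X,
    ⁅a, b⁆ ∈ (⁅π.ker, (⊤ : LieIdeal K (FreeLieAlgebra K X))⁆ :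
      LieIdeal K (FreeLieAlgebra K X))}

/-- The quotient map `L → L/N` as a Lie algebra homomorphism. -/
def lieQuotientMkHom (K : Type) [Field K] {L : Type} [LieRing L] [LieAlgebra K L]
    (N : LieIdeal K L) : L →ₗ⁅K⁆ L ⧸ N :=
  { ((N : Submodule K L).mkQ : L →ₗ[K] L ⧸ N) with map_lie' := rfl }

/-- The free presentation of `L/N` induced by a free presentation of `L`. -/
noncomputable def lieInducedPresentation (K : Type) [Field K] {L : Type} [LieRing L] [LieAlgebra K L]
    (N : LieIdeal K L) (X : Type) (π : FreeLieAlgebra K X →ₗ⁅K⁆ L) :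
    FreeLieAlgebra K X →ₗ⁅K⁆ (L ⧸ N) :=
  (lieQuotientMkHom K N).comp π

lemma lieKer_le_inducedKer (K : Type) [Field K] {L : Type} [LieRing L] [LieAlgebra K L]
    (N : LieIdeal K L) (X : Type) (π : FreeLieAlgebra K X →ₗ⁅K⁆ L) :
    π.ker ≤ (lieInducedPresentation K N X π).ker := by
  intro x hx
  rw [LieHom.mem_ker] at hx ⊢
  show (lieQuotientMkHom K N) (π x) = 0
  rw [hx]
  exact (lieQuotientMkHom K N).map_zero

lemma lieSchur_sub_le (K : Type) [Field K] {L : Type} [LieRing L] [LieAlgebra K L]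
    (N : LieIdeal K L) (X : Type) (π : FreeLieAlgebra K X →ₗ⁅K⁆ L) :
    ((π.ker ⊓ LieModule.lowerCentralSeries K (FreeLieAlgebra K X) (FreeLieAlgebra K X) 1 :
        LieIdeal K (FreeLieAlgebra K X)) : Submodule K (FreeLieAlgebra K X)) ≤
      (((lieInducedPresentation K N X π).ker ⊓
          LieModule.lowerCentralSeries K (FreeLieAlgebra K X) (FreeLieAlgebra K X) 1 :
        LieIdeal K (FreeLieAlgebra K X)) : Submodule K (FreeLieAlgebra K X)) := by
  intro x hx
  have hle : π.ker ⊓ LieModule.lowerCentralSeries K (FreeLieAlgebra K X) (FreeLieAlgebra K X) 1 ≤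
      (lieInducedPresentation K N X π).ker ⊓
        LieModule.lowerCentralSeries K (FreeLieAlgebra K X) (FreeLieAlgebra K X) 1 :=
    inf_le_inf_right _ (lieKer_le_inducedKer K N X π)
  exact hle hx

lemma lieSchur_rel_le (K : Type) [Field K] {L : Type} [LieRing L] [LieAlgebra K L]
    (N : LieIdeal K L) (X : Type) (π : FreeLieAlgebra K X →ₗ⁅K⁆ L) :
    Submodule.comap
        ((π.ker ⊓ LieModule.lowerCentralSeries K (FreeLieAlgebra K X) (FreeLieAlgebra K X) 1 :
          LieIdeal K (FreeLieAlgebra K X)) : Submodule K (FreeLieAlgebra K X)).subtype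
        ((⁅π.ker, (⊤ : LieIdeal K (FreeLieAlgebra K X))⁆ :
          LieIdeal K (FreeLieAlgebra K X)) : Submodule K (FreeLieAlgebra K X)) ≤
      Submodule.comap (Submodule.inclusion (lieSchur_sub_le K N X π))
        (Submodule.comap
          (((lieInducedPresentation K N X π).ker ⊓
              LieModule.lowerCentralSeries K (FreeLieAlgebra K X) (FreeLieAlgebra K X) 1 :
            LieIdeal K (FreeLieAlgebra K X)) : Submodule K (FreeLieAlgebra K X)).subtype
          ((⁅(lieInducedPresentation K N X π).ker,
              (⊤ : LieIdeal K (FreeLieAlgebra K X))⁆ :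
            LieIdeal K (FreeLieAlgebra K X)) : Submodule K (FreeLieAlgebra K X))) := by
  intro x hx
  simp only [Submodule.mem_comap, Submodule.coe_subtype] at hx ⊢
  exact (LieSubmodule.toSubmodule_le_toSubmodule _ _).mpr
    (LieSubmodule.mono_lie (lieKer_le_inducedKer K N X π) le_rfl) hx

/-- The natural map `M(L) → M(L/N)` between Schur multipliers. -/
noncomputable def lieSchurNaturalMap (K : Type) [Field K] {L : Type} [LieRing L]
    [LieAlgebra K L] (N : LieIdeal K L) (X : Type) (π : FreeLieAlgebra K X →ₗ⁅K⁆ L) :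
    lieSchurMultiplier K X π →ₗ[K] lieSchurMultiplier K X (lieInducedPresentation K N X π) :=
  Submodule.mapQ _ _ (Submodule.inclusion (lieSchur_sub_le K N X π))
    (lieSchur_rel_le K N X π)

/-! Let `R ⊆ S` be the kernels of `π : F → L` and of `F → L/N`. Since `N` is central,
`[S, F] ⊆ R ∩ F²`, so the natural map `M(L) → M(L/N)` has kernel `[S, F]/[R, F]` and continues to
an exact sequence `M(L) → M(L/N) → N ∩ L² → 0`. Thus (ii) and (iii) both say `[S, F] ⊆ [R, F]`.
If `M(L) → M(L/N)` is injective, a complement of its image gives (i); conversely (i) forces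
`M(L)` and the image to have the same dimension, which is finite because `F²/[R, F]` is the image
of `L ⊗ L`, so the map is injective. -/

theorem LinearMap.exists_equiv_quotient_iff_injective {K A B C : Type*} [Field K]
    [AddCommGroup A] [Module K A] [AddCommGroup B] [Module K B] [AddCommGroup C] [Module K C]
    [FiniteDimensional K A] [FiniteDimensional K C] {f : A →ₗ[K] B} {g : B →ₗ[K] C}
    (hfg : LinearMap.range f = LinearMap.ker g) (hg : Function.Surjective g) :
    (∃ S : Submodule K B, Nonempty (S ≃ₗ[K] C) ∧ Nonempty (A ≃ₗ[K] B ⧸ S)) ↔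
      Function.Injective f := by
  have coker : (B ⧸ LinearMap.range f) ≃ₗ[K] C :=
    (Submodule.quotEquivOfEq _ _ hfg).trans (g.quotKerEquivOfSurjective hg)
  constructor
  · rintro ⟨S, ⟨eS⟩, ⟨eA⟩⟩
    have : FiniteDimensional K S := Module.Finite.equiv eS.symm
    have : FiniteDimensional K (B ⧸ S) := Module.Finite.equiv eA
    have : FiniteDimensional K B := Module.Finite.of_submodule_quotient S
    have hS := S.finrank_quotient_add_finrank
    have hrange := (LinearMap.range f).finrank_quotient_add_finrank
    have hA := f.finrank_range_add_finrank_ker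
    rw [← eA.finrank_eq, eS.finrank_eq] at hS
    rw [coker.finrank_eq] at hrange
    have hker : finrank K (LinearMap.ker f) = 0 := by omega
    exact LinearMap.ker_eq_bot.1 (Submodule.finrank_eq_zero.1 hker)
  · intro hf
    obtain ⟨S, hS⟩ := (LinearMap.range f).exists_isCompl
    exact ⟨S, ⟨((LinearMap.range f).quotientEquivOfIsCompl S hS).symm.trans coker⟩,
      ⟨(LinearEquiv.ofInjective f hf).trans (S.quotientEquivOfIsCompl _ hS.symm).symm⟩⟩

section ExteriorSquare

variable {K F L : Type*} [Field K] [LieRing F] [LieAlgebra K F] [LieRing L] [LieAlgebra K L]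

theorem LieHom.finiteDimensional_map_mkQ_lowerCentralSeries_one [FiniteDimensional K L]
    {π : F →ₗ⁅K⁆ L} (hπ : Function.Surjective π) :
    FiniteDimensional K (((LieModule.lowerCentralSeries K F F 1 : LieIdeal K F) :
      Submodule K F).map ((⁅π.ker, (⊤ : LieIdeal K F)⁆ : LieIdeal K F) : Submodule K F).mkQ) := by
  set Q : Submodule K F := ((⁅π.ker, (⊤ : LieIdeal K F)⁆ : LieIdeal K F) : Submodule K F)
  obtain ⟨τ, hτ⟩ := (π : F →ₗ[K] L).exists_rightInverse_of_surjective
    (LinearMap.range_eq_top.2 hπ)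
  let B : L →ₗ[K] L →ₗ[K] F ⧸ Q :=
    ((LinearMap.mk₂ K (fun x y : F => ⁅x, y⁆) add_lie smul_lie lie_add lie_smul).compr₂
      Q.mkQ).compl₁₂ τ τ
  have hsection : ∀ x : F, x - τ (π x) ∈ π.ker := fun x => by
    simp [LieHom.mem_ker, show π (τ (π x)) = π x from LinearMap.congr_fun hτ (π x)]
  -- Modulo `Q = [ker π, F]` a bracket only depends on the images under `π`.
  have hB : ∀ x y : F, Q.mkQ ⁅x, y⁆ = B (π x) (π y) := fun x y => by
    have hleft : ⁅x - τ (π x), y⁆ ∈ Q :=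
      LieSubmodule.lie_mem_lie (hsection x) (LieSubmodule.mem_top y)
    have hright : ⁅y - τ (π y), τ (π x)⁆ ∈ Q :=
      LieSubmodule.lie_mem_lie (hsection y) (LieSubmodule.mem_top _)
    have : ⁅x, y⁆ - ⁅τ (π x), τ (π y)⁆ ∈ Q := by
      convert Q.sub_mem hleft hright using 1
      simp only [sub_lie, ← lie_skew (τ (π y)) (τ (π x)), ← lie_skew y (τ (π x))]
      abel
    simpa [B, Submodule.Quotient.eq] using this
  refine Submodule.finiteDimensional_of_le (S₂ := LinearMap.range (TensorProduct.lift B)) ?_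
  rw [LieModule.lowerCentralSeries_succ, LieModule.lowerCentralSeries_zero,
    LieIdeal.toLieSubalgebra_toSubmodule,
    LieSubmodule.lieIdeal_oper_eq_linear_span', Submodule.map_span, Submodule.span_le]
  rintro _ ⟨_, ⟨x, -, y, -, rfl⟩, rfl⟩
  exact ⟨π x ⊗ₜ π y, by simp [hB]⟩

theorem LieHom.finiteDimensional_schurMultiplier [FiniteDimensional K L]
    {π : F →ₗ⁅K⁆ L} (hπ : Function.Surjective π) :
    FiniteDimensional K
      (↥((π.ker ⊓ LieModule.lowerCentralSeries K F F 1 : LieIdeal K F) : Submodule K F) ⧸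
        Submodule.comap
          ((π.ker ⊓ LieModule.lowerCentralSeries K F F 1 : LieIdeal K F) :
            Submodule K F).subtype
          ((⁅π.ker, (⊤ : LieIdeal K F)⁆ : LieIdeal K F) : Submodule K F)) := by
  set p : Submodule K F :=
    ((π.ker ⊓ LieModule.lowerCentralSeries K F F 1 : LieIdeal K F) : Submodule K F)
  set Q : Submodule K F := ((⁅π.ker, (⊤ : LieIdeal K F)⁆ : LieIdeal K F) : Submodule K F)
  let μ : p →ₗ[K] F ⧸ Q := Q.mkQ ∘ₗ p.subtype
  have hker : LinearMap.ker μ = Submodule.comap p.subtype Q := by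
    rw [LinearMap.ker_comp, Submodule.ker_mkQ]
  have hrange : LinearMap.range μ ≤
      ((LieModule.lowerCentralSeries K F F 1 : LieIdeal K F) : Submodule K F).map Q.mkQ := by
    rw [LinearMap.range_comp, Submodule.range_subtype]
    exact Submodule.map_mono ((LieSubmodule.toSubmodule_le_toSubmodule _ _).2 inf_le_right)
  have := LieHom.finiteDimensional_map_mkQ_lowerCentralSeries_one hπ
  have : FiniteDimensional K (LinearMap.range μ) := Submodule.finiteDimensional_of_le hrange
  exact Module.Finite.equiv ((Submodule.quotEquivOfEq _ _ hker.symm).trans μ.quotKerEquivRange).symm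

end ExteriorSquare

section FreePresentation

variable {K : Type} [Field K] {L : Type} [LieRing L] [LieAlgebra K L] {N : LieIdeal K L}
  {X : Type} {π : FreeLieAlgebra K X →ₗ⁅K⁆ L}

theorem mem_ker_lieInducedPresentation {a : FreeLieAlgebra K X} :
    a ∈ (lieInducedPresentation K N X π).ker ↔ π a ∈ N :=
  Submodule.Quotient.mk_eq_zero _

theorem lie_ker_lieInducedPresentation_le (hN : N ≤ LieAlgebra.center K L) :
    ⁅(lieInducedPresentation K N X π).ker, (⊤ : LieIdeal K (FreeLieAlgebra K X))⁆ ≤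
      π.ker ⊓ LieModule.lowerCentralSeries K (FreeLieAlgebra K X) (FreeLieAlgebra K X) 1 := by
  refine le_inf ?_ (LieSubmodule.mono_lie_left ⊤ le_top)
  rw [LieSubmodule.lie_le_iff]
  intro s hs b _
  rw [LieHom.mem_ker, LieHom.map_lie, ← lie_skew, hN (mem_ker_lieInducedPresentation.1 hs),
    neg_zero]

theorem forall_mem_lieExteriorCenter_iff :
    (∀ x ∈ N, x ∈ lieExteriorCenter K X π) ↔
      ⁅(lieInducedPresentation K N X π).ker, (⊤ : LieIdeal K (FreeLieAlgebra K X))⁆ ≤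
        ⁅π.ker, (⊤ : LieIdeal K (FreeLieAlgebra K X))⁆ := by
  rw [LieSubmodule.lie_le_iff]
  constructor
  · intro h s hs b _
    exact h (π s) (mem_ker_lieInducedPresentation.1 hs) s rfl b
  · rintro h _ hx a rfl b
    exact h a (mem_ker_lieInducedPresentation.2 hx) b (LieSubmodule.mem_top b)

theorem lieSchurNaturalMap_mk
    (x : ↥((π.ker ⊓ LieModule.lowerCentralSeries K (FreeLieAlgebra K X) (FreeLieAlgebra K X) 1 :
      LieIdeal K (FreeLieAlgebra K X)) : Submodule K (FreeLieAlgebra K X))) :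
    lieSchurNaturalMap K N X π (Submodule.Quotient.mk x) =
      Submodule.Quotient.mk (Submodule.inclusion (lieSchur_sub_le K N X π) x) :=
  rfl

theorem injective_lieSchurNaturalMap_iff (hN : N ≤ LieAlgebra.center K L) :
    Function.Injective (lieSchurNaturalMap K N X π) ↔
      ⁅(lieInducedPresentation K N X π).ker, (⊤ : LieIdeal K (FreeLieAlgebra K X))⁆ ≤
        ⁅π.ker, (⊤ : LieIdeal K (FreeLieAlgebra K X))⁆ := by
  rw [injective_iff_map_eq_zero]
  constructor
  · intro hinj y hy
    have hmk := hinj (Submodule.Quotient.mk ⟨y, lie_ker_lieInducedPresentation_le hN hy⟩)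
    rw [lieSchurNaturalMap_mk, Submodule.Quotient.mk_eq_zero, Submodule.Quotient.mk_eq_zero] at hmk
    exact hmk hy
  · intro hle z hz
    obtain ⟨x, rfl⟩ := Submodule.Quotient.mk_surjective _ z
    rw [lieSchurNaturalMap_mk, Submodule.Quotient.mk_eq_zero] at hz
    exact (Submodule.Quotient.mk_eq_zero _).2 (hle hz)

variable (π) in
noncomputable def lieSchurConnectingMap (hN : N ≤ LieAlgebra.center K L) :
    lieSchurMultiplier K X (lieInducedPresentation K N X π) →ₗ[K]
      ↥((N : Submodule K L) ⊓
        ((LieModule.lowerCentralSeries K L L 1 : LieSubmodule K L L) : Submodule K L)) :=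
  Submodule.liftQ _
    (LinearMap.codRestrict _ ((π : FreeLieAlgebra K X →ₗ[K] L) ∘ₗ Submodule.subtype _)
      fun a => ⟨mem_ker_lieInducedPresentation.1 a.2.1,
        LieIdeal.map_lowerCentralSeries_le 1 (LieIdeal.mem_map a.2.2)⟩)
    fun _ hx => Subtype.ext ((lie_ker_lieInducedPresentation_le hN).trans inf_le_left hx)

theorem lieSchurConnectingMap_mk (hN : N ≤ LieAlgebra.center K L)
    (x : ↥(((lieInducedPresentation K N X π).ker ⊓
      LieModule.lowerCentralSeries K (FreeLieAlgebra K X) (FreeLieAlgebra K X) 1 :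
        LieIdeal K (FreeLieAlgebra K X)) : Submodule K (FreeLieAlgebra K X))) :
    (lieSchurConnectingMap π hN (Submodule.Quotient.mk x) : L) = π x :=
  rfl

theorem surjective_lieSchurConnectingMap (hN : N ≤ LieAlgebra.center K L)
    (hπ : Function.Surjective π) : Function.Surjective (lieSchurConnectingMap π hN) := by
  rintro ⟨y, hyN, hyL2⟩
  rw [← LieIdeal.lowerCentralSeries_map_eq 1 hπ] at hyL2
  obtain ⟨⟨x, hx⟩, rfl⟩ := LieIdeal.mem_map_of_surjective hπ hyL2
  exact ⟨Submodule.Quotient.mk ⟨x, mem_ker_lieInducedPresentation.2 hyN, hx⟩, rfl⟩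

theorem range_lieSchurNaturalMap (hN : N ≤ LieAlgebra.center K L) :
    LinearMap.range (lieSchurNaturalMap K N X π) = LinearMap.ker (lieSchurConnectingMap π hN) := by
  ext z
  obtain ⟨x, rfl⟩ := Submodule.Quotient.mk_surjective _ z
  rw [LinearMap.mem_ker, ← Subtype.coe_inj, lieSchurConnectingMap_mk, ZeroMemClass.coe_zero,
    ← LieHom.mem_ker]
  constructor
  · rintro ⟨w, hw⟩
    obtain ⟨y, rfl⟩ := Submodule.Quotient.mk_surjective _ w
    rw [lieSchurNaturalMap_mk, Submodule.Quotient.eq] at hw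
    have hyx : (y : FreeLieAlgebra K X) - x ∈ π.ker :=
      ((lie_ker_lieInducedPresentation_le hN).trans inf_le_left) hw
    simpa using π.ker.sub_mem y.2.1 hyx
  · intro hx
    exact ⟨Submodule.Quotient.mk ⟨x, hx, x.2.2⟩, rfl⟩

end FreePresentation

/-- for a central ideal `N` of a finite-dimensional Lie algebra `L`, the
following are equivalent: (i) `M(L) ≅ M(L/N)/(N ∩ L²)` (the quotient of `M(L/N)` by a
copy of `N ∩ L²`); (ii) `N ⊆ Z^∧(L)`; (iii) the natural map `M(L) → M(L/N)` is
injective. -/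
theorem schur_multiplier_quotient_tfae (K L : Type) [Field K] [LieRing L]
    [LieAlgebra K L] [FiniteDimensional K L] (N : LieIdeal K L)
    (hN : N ≤ LieAlgebra.center K L) :
    ∀ (X : Type) (π : FreeLieAlgebra K X →ₗ⁅K⁆ L), Function.Surjective π →
      (((∃ S : Submodule K (lieSchurMultiplier K X (lieInducedPresentation K N X π)),
          Nonempty (↥S ≃ₗ[K] ↥((N : Submodule K L) ⊓
            ((LieModule.lowerCentralSeries K L L 1 : LieSubmodule K L L) : Submodule K L))) ∧
          Nonempty (lieSchurMultiplier K X π ≃ₗ[K]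
            (lieSchurMultiplier K X (lieInducedPresentation K N X π) ⧸ S))) ↔
        (∀ x ∈ N, (x : L) ∈ lieExteriorCenter K X π)) ∧
      ((∀ x ∈ N, (x : L) ∈ lieExteriorCenter K X π) ↔
        Function.Injective (lieSchurNaturalMap K N X π))) := by
  intro X π hπ
  have : FiniteDimensional K (lieSchurMultiplier K X π) := π.finiteDimensional_schurMultiplier hπ
  have hcenter := forall_mem_lieExteriorCenter_iff (N := N) (π := π)
  have hinj := injective_lieSchurNaturalMap_iff (π := π) hN
  refine ⟨?_, hcenter.trans hinj.symm⟩
  rw [hcenter, ← hinj]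
  exact LinearMap.exists_equiv_quotient_iff_injective (range_lieSchurNaturalMap hN)
    (surjective_lieSchurConnectingMap hN hπ)
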